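/- Let k be a field and let I ⊆ k[x₀,x₁,x₂] be a strongly stable monomial ideal such that dim_k k[x₀,x₁,x₂]/I = 11, I contains no monomial of degree at most 2, and I is generated by its monomials of degree at most 5. Then I is the ideal generated by x₂⁴ together with all monomials of degree 3 other than x₂³; that is, I = (x₀³, x₀²x₁, x₀²x₂, x₀x₁², x₀x₁x₂, x₀x₂², x₁³, x₁²x₂, x₁x₂², x₂⁴). (This is the unique possibility for the generic initial ideal of a general hyperplane section of a degree-11 rational curve when that ideal has no quadratic generators.) -/

import Mathlib

open MvPolynomial

/-- The total degree of an exponent vector. -/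
def expDeg3 (d : Fin 3 →₀ ℕ) : ℕ := d.sum fun _ e => e

/-- `I ⊆ k[x₀,x₁,x₂]` is a monomial ideal: it is generated by (some set of) monomials. -/
def IsMonomialIdeal3 (k : Type*) [Field k] (I : Ideal (MvPolynomial (Fin 3) k)) : Prop :=
  ∃ S : Set (Fin 3 →₀ ℕ), I = Ideal.span ((fun d => monomial d (1 : k)) '' S)

/-- `I` is strongly stable (Borel-fixed): for every monomial `m ∈ I` and indices `i < j`
with `x_j ∣ m`, we have `x_i · m / x_j ∈ I`. -/
def IsStronglyStable3 (k : Type*) [Field k] (I : Ideal (MvPolynomial (Fin 3) k)) : Prop :=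
  ∀ d : Fin 3 →₀ ℕ, monomial d (1 : k) ∈ I →
    ∀ i j : Fin 3, i < j → d j ≠ 0 →
      monomial (d - Finsupp.single j 1 + Finsupp.single i 1) (1 : k) ∈ I

/-! ### Auxiliary machinery -/

/-- The exponent vector `(a, b, c)`. -/
noncomputable def vv (a b c : ℕ) : Fin 3 →₀ ℕ :=
  Finsupp.single 0 a + Finsupp.single 1 b + Finsupp.single 2 c

@[simp] lemma vv_apply0 (a b c : ℕ) : vv a b c 0 = a := by simp [vv, Finsupp.single_apply]
@[simp] lemma vv_apply1 (a b c : ℕ) : vv a b c 1 = b := by simp [vv, Finsupp.single_apply]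
@[simp] lemma vv_apply2 (a b c : ℕ) : vv a b c 2 = c := by simp [vv, Finsupp.single_apply]

lemma expDeg3_eq (d : Fin 3 →₀ ℕ) : expDeg3 d = d 0 + d 1 + d 2 := by
  rw [expDeg3, Finsupp.sum_fintype]
  · rw [Fin.sum_univ_three]
  · intro; rfl

@[simp] lemma expDeg3_vv (a b c : ℕ) : expDeg3 (vv a b c) = a + b + c := by
  rw [expDeg3_eq]; simp

lemma vv_eq_self (d : Fin 3 →₀ ℕ) : vv (d 0) (d 1) (d 2) = d := by
  ext i; fin_cases i <;> simp

lemma vv_inj {a b c a' b' c' : ℕ} (h : vv a b c = vv a' b' c') : a = a' ∧ b = b' ∧ c = c' := by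
  refine ⟨?_, ?_, ?_⟩
  · have := congrArg (fun f => f 0) h; simpa using this
  · have := congrArg (fun f => f 1) h; simpa using this
  · have := congrArg (fun f => f 2) h; simpa using this

lemma vv_le {a b c : ℕ} {d : Fin 3 →₀ ℕ} (h0 : a ≤ d 0) (h1 : b ≤ d 1) (h2 : c ≤ d 2) :
    vv a b c ≤ d := by
  rw [Finsupp.le_def]; intro i; fin_cases i <;> simpa

lemma tri (a b c : ℕ) (h : 3 ≤ a + b + c) (h1 : 1 ≤ a + b) :
    ∃ x y z, x + y + z = 3 ∧ 1 ≤ x + y ∧ x ≤ a ∧ y ≤ b ∧ z ≤ c :=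
  ⟨min a 3, min b (3 - min a 3), 3 - min a 3 - min b (3 - min a 3),
    by omega, by omega, by omega, by omega, by omega⟩

lemma tri' (a b c : ℕ) (h : 3 ≤ a + b + c) :
    ∃ x y z, x + y + z = 3 ∧ x ≤ a ∧ y ≤ b ∧ z ≤ c :=
  ⟨min a 3, min b (3 - min a 3), 3 - min a 3 - min b (3 - min a 3),
    by omega, by omega, by omega, by omega⟩

section MonoVV
variable {k : Type*} [Field k]
lemma monomial_vv (a b c : ℕ) :
    (monomial (vv a b c) (1 : k)) = X 0 ^ a * X 1 ^ b * X 2 ^ c := by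
  rw [X_pow_eq_monomial, X_pow_eq_monomial, X_pow_eq_monomial, monomial_mul, monomial_mul]
  simp [vv]
end MonoVV

attribute [irreducible] vv

/-- The ten exponent vectors of degree at most `2`. -/
noncomputable def ee : Fin 10 → (Fin 3 →₀ ℕ)
  | 0 => vv 0 0 0 | 1 => vv 1 0 0 | 2 => vv 0 1 0 | 3 => vv 0 0 1 | 4 => vv 2 0 0
  | 5 => vv 1 1 0 | 6 => vv 1 0 1 | 7 => vv 0 2 0 | 8 => vv 0 1 1 | 9 => vv 0 0 2

/-- The ten low exponent vectors together with two further vectors. -/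
noncomputable def e12 (d1 d2 : Fin 3 →₀ ℕ) : Fin 12 → (Fin 3 →₀ ℕ)
  | 0 => vv 0 0 0 | 1 => vv 1 0 0 | 2 => vv 0 1 0 | 3 => vv 0 0 1 | 4 => vv 2 0 0
  | 5 => vv 1 1 0 | 6 => vv 1 0 1 | 7 => vv 0 2 0 | 8 => vv 0 1 1 | 9 => vv 0 0 2
  | 10 => d1 | 11 => d2

lemma e12_inj {d1 d2 : Fin 3 →₀ ℕ} (h1 : 3 ≤ expDeg3 d1) (h2 : 3 ≤ expDeg3 d2)
    (h12 : d1 ≠ d2) : Function.Injective (e12 d1 d2) := by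
  have hd1 : ∀ a b c : ℕ, a + b + c ≤ 2 → vv a b c ≠ d1 := by
    intro a b c hle he; rw [← he, expDeg3_vv] at h1; omega
  have hd2 : ∀ a b c : ℕ, a + b + c ≤ 2 → vv a b c ≠ d2 := by
    intro a b c hle he; rw [← he, expDeg3_vv] at h2; omega
  intro i j h
  fin_cases i <;> fin_cases j <;>
    simp only [e12] at h ⊢ <;>
    first
      | rfl
      | (exact absurd h (by
          first
            | (intro he; obtain ⟨x, y, z⟩ := vv_inj he; omega)
            | exact hd1 _ _ _ (by norm_num)
            | exact hd2 _ _ _ (by norm_num)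
            | exact h12
            | exact fun he => h12 he.symm
            | (intro he; exact hd1 _ _ _ (by norm_num) he.symm)
            | (intro he; exact hd2 _ _ _ (by norm_num) he.symm)))

section Field
variable {k : Type*} [Field k] {I : Ideal (MvPolynomial (Fin 3) k)}

lemma mono_mul {d e : Fin 3 →₀ ℕ} (hdI : monomial d (1:k) ∈ I) (hde : d ≤ e) :
    monomial e (1:k) ∈ I := by
  have : monomial e (1:k) = monomial d 1 * monomial (e - d) 1 := by
    rw [monomial_mul, one_mul, add_tsub_cancel_of_le hde]
  rw [this]
  exact Ideal.mul_mem_right _ _ hdI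

lemma memI_support (hmon : IsMonomialIdeal3 k I)
    {p : MvPolynomial (Fin 3) k} (hp : p ∈ I) {d} (hd : d ∈ p.support) :
    monomial d (1:k) ∈ I := by
  obtain ⟨S, hS⟩ := hmon
  rw [hS, mem_ideal_span_monomial_image] at hp ⊢
  intro xi hxi
  have hxd := Finset.mem_singleton.mp (support_monomial_subset hxi)
  subst hxd
  exact hp _ hd

lemma li_of_std (hmon : IsMonomialIdeal3 k I)
    {n : ℕ} {e : Fin n → (Fin 3 →₀ ℕ)} (hinj : Function.Injective e)
    (hstd : ∀ i, monomial (e i) (1:k) ∉ I) :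
    LinearIndependent k (fun i => Ideal.Quotient.mkₐ k I (monomial (e i) (1:k))) := by
  rw [Fintype.linearIndependent_iff]
  intro c hc j
  by_contra hcj
  have hp : (∑ i, monomial (e i) (c i)) ∈ I := by
    rw [← Ideal.Quotient.eq_zero_iff_mem, ← Ideal.Quotient.mkₐ_eq_mk k, map_sum, ← hc]
    congr 1; funext i
    rw [← map_smul]
    congr 1
    rw [MvPolynomial.smul_monomial, smul_eq_mul, mul_one]
  have hj : e j ∈ (∑ i, monomial (e i) (c i)).support := by
    rw [mem_support_iff]
    have : coeff (e j) (∑ i, monomial (e i) (c i)) = c j := by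
      rw [MvPolynomial.coeff_sum, Finset.sum_eq_single j]
      · rw [coeff_monomial, if_pos rfl]
      · intro b _ hbj
        rw [coeff_monomial, if_neg (fun h => hbj (hinj h))]
      · intro h; exact absurd (Finset.mem_univ j) h
    rw [this]; exact hcj
  exact hstd j (memI_support hmon hp hj)

lemma not_eleven (hmon : IsMonomialIdeal3 k I)
    {e : Fin 12 → (Fin 3 →₀ ℕ)} (hinj : Function.Injective e)
    (hstd : ∀ i, monomial (e i) (1:k) ∉ I) :
    Module.finrank k (MvPolynomial (Fin 3) k ⧸ I) ≠ 11 := by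
  intro h11
  have h12 : (12 : Cardinal) ≤ Module.rank k (MvPolynomial (Fin 3) k ⧸ I) := by
    have := (li_of_std hmon hinj hstd).cardinal_lift_le_rank
    simpa using this
  rcases lt_or_ge (Module.rank k (MvPolynomial (Fin 3) k ⧸ I)) Cardinal.aleph0 with h | h
  · have := Cardinal.toNat_le_toNat h12 h
    rw [Module.finrank] at h11
    simp at this
    omega
  · rw [Module.finrank, Cardinal.toNat_apply_of_aleph0_le h] at h11
    exact absurd h11 (by norm_num)

/-- From `x₂³ ∈ I` and strong stability, every cubic monomial lies in `I`. -/
lemma cubes (hss : IsStronglyStable3 k I) (h3 : monomial (vv 0 0 3) (1:k) ∈ I) :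
    ∀ x y z : ℕ, x + y + z = 3 → monomial (vv x y z) (1:k) ∈ I := by
  have mv : ∀ (a b c : ℕ) (i j : Fin 3) (a' b' c' : ℕ),
      monomial (vv a b c) (1:k) ∈ I → i < j → vv a b c j ≠ 0 →
      vv a b c - Finsupp.single j 1 + Finsupp.single i 1 = vv a' b' c' →
      monomial (vv a' b' c') (1:k) ∈ I := by
    intro a b c i j a' b' c' h hij hj he
    have := hss _ h i j hij hj
    rwa [he] at this
  have eq1 : ∀ (a b c : ℕ) (i j : Fin 3) (a' b' c' : ℕ),
      (vv a b c) 0 - (Finsupp.single (α := Fin 3) j 1) 0 + (Finsupp.single (α := Fin 3) i 1) 0 = a' →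
      (vv a b c) 1 - (Finsupp.single (α := Fin 3) j 1) 1 + (Finsupp.single (α := Fin 3) i 1) 1 = b' →
      (vv a b c) 2 - (Finsupp.single (α := Fin 3) j 1) 2 + (Finsupp.single (α := Fin 3) i 1) 2 = c' →
      vv a b c - Finsupp.single j 1 + Finsupp.single i 1 = vv a' b' c' := by
    intro a b c i j a' b' c' h0 h1 h2
    ext t; fin_cases t <;>
      simp only [Finsupp.add_apply, Finsupp.tsub_apply] <;>
      [(rw [← h0]; simp); (rw [← h1]; simp); (rw [← h2]; simp)]
  have m012 : monomial (vv 0 1 2) (1:k) ∈ I := mv 0 0 3 1 2 0 1 2 h3 (by decide) (by simp)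
    (eq1 _ _ _ _ _ _ _ _ (by simp [Finsupp.single_apply]) (by simp [Finsupp.single_apply])
      (by simp [Finsupp.single_apply]))
  have m102 : monomial (vv 1 0 2) (1:k) ∈ I := mv 0 0 3 0 2 1 0 2 h3 (by decide) (by simp)
    (eq1 _ _ _ _ _ _ _ _ (by simp [Finsupp.single_apply]) (by simp [Finsupp.single_apply])
      (by simp [Finsupp.single_apply]))
  have m021 : monomial (vv 0 2 1) (1:k) ∈ I := mv 0 1 2 1 2 0 2 1 m012 (by decide) (by simp)
    (eq1 _ _ _ _ _ _ _ _ (by simp [Finsupp.single_apply]) (by simp [Finsupp.single_apply])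
      (by simp [Finsupp.single_apply]))
  have m111 : monomial (vv 1 1 1) (1:k) ∈ I := mv 0 1 2 0 2 1 1 1 m012 (by decide) (by simp)
    (eq1 _ _ _ _ _ _ _ _ (by simp [Finsupp.single_apply]) (by simp [Finsupp.single_apply])
      (by simp [Finsupp.single_apply]))
  have m030 : monomial (vv 0 3 0) (1:k) ∈ I := mv 0 2 1 1 2 0 3 0 m021 (by decide) (by simp)
    (eq1 _ _ _ _ _ _ _ _ (by simp [Finsupp.single_apply]) (by simp [Finsupp.single_apply])
      (by simp [Finsupp.single_apply]))
  have m120 : monomial (vv 1 2 0) (1:k) ∈ I := mv 0 2 1 0 2 1 2 0 m021 (by decide) (by simp)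
    (eq1 _ _ _ _ _ _ _ _ (by simp [Finsupp.single_apply]) (by simp [Finsupp.single_apply])
      (by simp [Finsupp.single_apply]))
  have m201 : monomial (vv 2 0 1) (1:k) ∈ I := mv 1 1 1 0 1 2 0 1 m111 (by decide) (by simp)
    (eq1 _ _ _ _ _ _ _ _ (by simp [Finsupp.single_apply]) (by simp [Finsupp.single_apply])
      (by simp [Finsupp.single_apply]))
  have m210 : monomial (vv 2 1 0) (1:k) ∈ I := mv 1 1 1 0 2 2 1 0 m111 (by decide) (by simp)
    (eq1 _ _ _ _ _ _ _ _ (by simp [Finsupp.single_apply]) (by simp [Finsupp.single_apply])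
      (by simp [Finsupp.single_apply]))
  have m300 : monomial (vv 3 0 0) (1:k) ∈ I := mv 2 1 0 0 1 3 0 0 m210 (by decide) (by simp)
    (eq1 _ _ _ _ _ _ _ _ (by simp [Finsupp.single_apply]) (by simp [Finsupp.single_apply])
      (by simp [Finsupp.single_apply]))
  intro x y z hs
  have hx : x ≤ 3 := by omega
  have hy : y ≤ 3 := by omega
  have hz : z ≤ 3 := by omega
  interval_cases x <;> interval_cases y <;> interval_cases z <;>
    first
      | exact h3 | exact m012 | exact m102 | exact m021 | exact m111 | exact m201
      | exact m030 | exact m120 | exact m210 | exact m300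
      | exact absurd hs (by norm_num)

lemma low_mem {x y z : ℕ} (hs : x + y + z ≤ 2) (a : k) :
    Ideal.Quotient.mkₐ k I (monomial (vv x y z) a) ∈
      Submodule.span k (Set.range fun i : Fin 10 =>
        Ideal.Quotient.mkₐ k I (monomial (ee i) (1:k))) := by
  have key : ∀ i : Fin 10, Ideal.Quotient.mkₐ k I (monomial (ee i) a) ∈
      Submodule.span k (Set.range fun i : Fin 10 =>
        Ideal.Quotient.mkₐ k I (monomial (ee i) (1:k))) := by
    intro i
    have h : monomial (ee i) a = a • monomial (ee i) (1:k) := by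
      rw [MvPolynomial.smul_monomial, smul_eq_mul, mul_one]
    rw [h, map_smul]
    exact Submodule.smul_mem _ _ (Submodule.subset_span ⟨i, rfl⟩)
  have hx : x ≤ 2 := by omega
  have hy : y ≤ 2 := by omega
  have hz : z ≤ 2 := by omega
  have k0 := key 0; have k1 := key 1; have k2 := key 2; have k3 := key 3; have k4 := key 4
  have k5 := key 5; have k6 := key 6; have k7 := key 7; have k8 := key 8; have k9 := key 9
  simp only [ee] at k0 k1 k2 k3 k4 k5 k6 k7 k8 k9
  interval_cases x <;> interval_cases y <;> interval_cases z <;>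
    first
      | exact k0 | exact k1 | exact k2 | exact k3 | exact k4
      | exact k5 | exact k6 | exact k7 | exact k8 | exact k9
      | exact absurd hs (by norm_num)

lemma rank_ub (hI3 : ∀ d : Fin 3 →₀ ℕ, 3 ≤ expDeg3 d → monomial d (1:k) ∈ I) :
    Module.finrank k (MvPolynomial (Fin 3) k ⧸ I) ≠ 11 := by
  set s : Set (MvPolynomial (Fin 3) k ⧸ I) :=
    Set.range fun i : Fin 10 => Ideal.Quotient.mkₐ k I (monomial (ee i) (1:k)) with hs
  have htop : Submodule.span k s = ⊤ := by
    rw [Submodule.eq_top_iff']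
    intro q
    obtain ⟨p, rfl⟩ := Ideal.Quotient.mkₐ_surjective k (I := I) q
    induction p using MvPolynomial.induction_on' with
    | add p q hp hq => rw [map_add]; exact Submodule.add_mem _ hp hq
    | monomial u a =>
      by_cases hu : expDeg3 u ≤ 2
      · have hx : u = vv (u 0) (u 1) (u 2) := (vv_eq_self u).symm
        have hsum : u 0 + u 1 + u 2 ≤ 2 := by rw [← expDeg3_eq]; exact hu
        rw [hx]
        exact low_mem hsum a
      · have hm : monomial u a ∈ I := by
          have h1 : monomial u a = C a * monomial u (1:k) := by
            rw [C_mul_monomial, mul_one]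
          rw [h1]
          exact Ideal.mul_mem_left _ _ (hI3 u (by omega))
        have : Ideal.Quotient.mkₐ k I (monomial u a) = 0 := by
          rw [Ideal.Quotient.mkₐ_eq_mk, Ideal.Quotient.eq_zero_iff_mem]
          exact hm
        rw [this]
        exact Submodule.zero_mem _
  intro h11
  have hle : Module.rank k (MvPolynomial (Fin 3) k ⧸ I) ≤ 10 := by
    have h1 := rank_span_le (R := k) s
    rw [htop] at h1
    rw [← rank_top k]
    refine h1.trans ?_
    rw [hs]
    simpa using Cardinal.mk_range_le_lift
      (f := fun i : Fin 10 => Ideal.Quotient.mkₐ k I (monomial (ee i) (1:k)))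
  have := Cardinal.toNat_le_toNat hle (by exact_mod_cast Cardinal.nat_lt_aleph0 10)
  rw [Module.finrank] at h11
  simp at this
  omega

end Field

/-- A strongly stable monomial ideal in `k[x₀,x₁,x₂]` of colength 11 with no monomial of
degree at most 2 and generated by its monomials of degree at most 5 must be
`(x₀³, x₀²x₁, x₀²x₂, x₀x₁², x₀x₁x₂, x₀x₂², x₁³, x₁²x₂, x₁x₂², x₂⁴)`. -/
theorem unique_gin_no_quadratic_generators
    (k : Type*) [Field k] (I : Ideal (MvPolynomial (Fin 3) k))
    (hmon : IsMonomialIdeal3 k I) (hss : IsStronglyStable3 k I)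
    (hcolen : Module.finrank k (MvPolynomial (Fin 3) k ⧸ I) = 11)
    (hlow : ∀ d : Fin 3 →₀ ℕ, expDeg3 d ≤ 2 → monomial d (1 : k) ∉ I)
    (hgen : I = Ideal.span ((fun d => monomial d (1 : k)) ''
      {d : Fin 3 →₀ ℕ | expDeg3 d ≤ 5 ∧ monomial d (1 : k) ∈ I})) :
    I = Ideal.span {X 0 ^ 3, X 0 ^ 2 * X 1, X 0 ^ 2 * X 2, X 0 * X 1 ^ 2,
      X 0 * X 1 * X 2, X 0 * X 2 ^ 2, X 1 ^ 3, X 1 ^ 2 * X 2, X 1 * X 2 ^ 2,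
      (X 2 : MvPolynomial (Fin 3) k) ^ 4} := by
  classical
  set J : Ideal (MvPolynomial (Fin 3) k) := Ideal.span {X 0 ^ 3, X 0 ^ 2 * X 1,
    X 0 ^ 2 * X 2, X 0 * X 1 ^ 2, X 0 * X 1 * X 2, X 0 * X 2 ^ 2, X 1 ^ 3, X 1 ^ 2 * X 2,
    X 1 * X 2 ^ 2, (X 2 : MvPolynomial (Fin 3) k) ^ 4} with hJ
  -- Step 1: x₂³ ∉ I
  have hx3 : monomial (vv 0 0 3) (1:k) ∉ I := by
    intro h3
    have hcub := cubes hss h3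
    have hI3 : ∀ d : Fin 3 →₀ ℕ, 3 ≤ expDeg3 d → monomial d (1:k) ∈ I := by
      intro d hd
      have h3' : 3 ≤ d 0 + d 1 + d 2 := by rw [← expDeg3_eq]; exact hd
      obtain ⟨x, y, z, hxyz, hx, hy, hz⟩ := tri' (d 0) (d 1) (d 2) h3'
      exact mono_mul (hcub x y z hxyz) (vv_le hx hy hz)
    exact rank_ub hI3 hcolen
  -- Step 2: all cubics other than x₂³ lie in I
  have hcub9 : ∀ x y z : ℕ, x + y + z = 3 → 1 ≤ x + y → monomial (vv x y z) (1:k) ∈ I := by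
    intro x y z hs h1
    by_contra hm
    refine not_eleven hmon
      (e12_inj (d1 := vv x y z) (d2 := vv 0 0 3) (by simp; omega) (by norm_num) ?_) ?_ hcolen
    · intro he; obtain ⟨h1', h2', h3'⟩ := vv_inj he; omega
    · intro i
      fin_cases i <;> simp only [e12] <;>
        first
          | exact hm
          | exact hx3
          | exact hlow _ (by norm_num)
  -- Step 3: x₂⁴ ∈ I
  have hx4 : monomial (vv 0 0 4) (1:k) ∈ I := by
    by_contra hm
    refine not_eleven hmon
      (e12_inj (d1 := vv 0 0 3) (d2 := vv 0 0 4) (by norm_num) (by norm_num)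
        (fun he => by obtain ⟨_, _, h⟩ := vv_inj he; omega)) ?_ hcolen
    intro i
    fin_cases i <;> simp only [e12] <;>
      first
        | exact hx3
        | exact hm
        | exact hlow _ (by norm_num)
  -- membership of the nine cubics and x₂⁴ in J
  have hX : ∀ p ∈ ({X 0 ^ 3, X 0 ^ 2 * X 1, X 0 ^ 2 * X 2, X 0 * X 1 ^ 2,
      X 0 * X 1 * X 2, X 0 * X 2 ^ 2, X 1 ^ 3, X 1 ^ 2 * X 2, X 1 * X 2 ^ 2,
      (X 2 : MvPolynomial (Fin 3) k) ^ 4} : Set (MvPolynomial (Fin 3) k)), p ∈ J :=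
    fun p hp => Ideal.subset_span hp
  have e300 : monomial (vv 3 0 0) (1:k) ∈ J := by
    have heq : monomial (vv 3 0 0) (1:k) = X 0 ^ 3 := by rw [monomial_vv]; ring
    rw [heq]; exact hX _ (Or.inl rfl)
  have e210 : monomial (vv 2 1 0) (1:k) ∈ J := by
    have heq : monomial (vv 2 1 0) (1:k) = X 0 ^ 2 * X 1 := by rw [monomial_vv]; ring
    rw [heq]; exact hX _ (Or.inr (Or.inl rfl))
  have e201 : monomial (vv 2 0 1) (1:k) ∈ J := by
    have heq : monomial (vv 2 0 1) (1:k) = X 0 ^ 2 * X 2 := by rw [monomial_vv]; ring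
    rw [heq]; exact hX _ (Or.inr (Or.inr (Or.inl rfl)))
  have e120 : monomial (vv 1 2 0) (1:k) ∈ J := by
    have heq : monomial (vv 1 2 0) (1:k) = X 0 * X 1 ^ 2 := by rw [monomial_vv]; ring
    rw [heq]; exact hX _ (Or.inr (Or.inr (Or.inr (Or.inl rfl))))
  have e111 : monomial (vv 1 1 1) (1:k) ∈ J := by
    have heq : monomial (vv 1 1 1) (1:k) = X 0 * X 1 * X 2 := by rw [monomial_vv]; ring
    rw [heq]; exact hX _ (Or.inr (Or.inr (Or.inr (Or.inr (Or.inl rfl)))))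
  have e102 : monomial (vv 1 0 2) (1:k) ∈ J := by
    have heq : monomial (vv 1 0 2) (1:k) = X 0 * X 2 ^ 2 := by rw [monomial_vv]; ring
    rw [heq]; exact hX _ (Or.inr (Or.inr (Or.inr (Or.inr (Or.inr (Or.inl rfl))))))
  have e030 : monomial (vv 0 3 0) (1:k) ∈ J := by
    have heq : monomial (vv 0 3 0) (1:k) = X 1 ^ 3 := by rw [monomial_vv]; ring
    rw [heq]; exact hX _ (Or.inr (Or.inr (Or.inr (Or.inr (Or.inr (Or.inr (Or.inl rfl)))))))
  have e021 : monomial (vv 0 2 1) (1:k) ∈ J := by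
    have heq : monomial (vv 0 2 1) (1:k) = X 1 ^ 2 * X 2 := by rw [monomial_vv]; ring
    rw [heq]; exact hX _ (Or.inr (Or.inr (Or.inr (Or.inr (Or.inr (Or.inr (Or.inr (Or.inl rfl))))))))
  have e012 : monomial (vv 0 1 2) (1:k) ∈ J := by
    have heq : monomial (vv 0 1 2) (1:k) = X 1 * X 2 ^ 2 := by rw [monomial_vv]; ring
    rw [heq]
    exact hX _ (Or.inr (Or.inr (Or.inr (Or.inr (Or.inr (Or.inr (Or.inr (Or.inr (Or.inl rfl)))))))))
  have hx4J : monomial (vv 0 0 4) (1:k) ∈ J := by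
    have heq : monomial (vv 0 0 4) (1:k) = (X 2 : MvPolynomial (Fin 3) k) ^ 4 := by
      rw [monomial_vv]; ring
    rw [heq]
    exact hX _ (Or.inr (Or.inr (Or.inr (Or.inr (Or.inr (Or.inr (Or.inr (Or.inr (Or.inr rfl)))))))))
  have hcubJ : ∀ x y z : ℕ, x + y + z = 3 → 1 ≤ x + y → monomial (vv x y z) (1:k) ∈ J := by
    intro x y z hs h1
    have hx : x ≤ 3 := by omega
    have hy : y ≤ 3 := by omega
    have hz : z ≤ 3 := by omega
    interval_cases x <;> interval_cases y <;> interval_cases z <;>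
      first
        | (exfalso; omega)
        | exact e300 | exact e210 | exact e201 | exact e120 | exact e111
        | exact e102 | exact e030 | exact e021 | exact e012
  -- conclude
  apply le_antisymm
  · conv_lhs => rw [hgen]
    apply Ideal.span_le.mpr
    rintro q ⟨d, ⟨hd5, hdI⟩, rfl⟩
    have hd3 : 3 ≤ expDeg3 d := by
      by_contra h
      exact hlow d (by omega) hdI
    have hd0 : 3 ≤ d 0 + d 1 + d 2 := by rw [← expDeg3_eq]; exact hd3
    by_cases hab : 1 ≤ d 0 + d 1
    · obtain ⟨x, y, z, hsz, h1, hx, hy, hz⟩ := tri (d 0) (d 1) (d 2) hd0 hab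
      exact mono_mul (hcubJ x y z hsz h1) (vv_le hx hy hz)
    · have hz4 : 4 ≤ d 2 := by
        have hne : d 2 ≠ 3 := by
          intro h3
          apply hx3
          have : d = vv 0 0 3 := by
            rw [← vv_eq_self d]
            congr 1 <;> omega
          rwa [this] at hdI
        omega
      exact mono_mul hx4J (vv_le (by omega) (by omega) (by omega))
  · apply Ideal.span_le.mpr
    intro q hq
    simp only [Set.mem_insert_iff, Set.mem_singleton_iff] at hq
    rcases hq with rfl | rfl | rfl | rfl | rfl | rfl | rfl | rfl | rfl | rfl
    · have h : (X 0 ^ 3 : MvPolynomial (Fin 3) k) = monomial (vv 3 0 0) 1 := by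
        rw [monomial_vv]; ring
      rw [h]; exact hcub9 3 0 0 (by norm_num) (by norm_num)
    · have h : (X 0 ^ 2 * X 1 : MvPolynomial (Fin 3) k) = monomial (vv 2 1 0) 1 := by
        rw [monomial_vv]; ring
      rw [h]; exact hcub9 2 1 0 (by norm_num) (by norm_num)
    · have h : (X 0 ^ 2 * X 2 : MvPolynomial (Fin 3) k) = monomial (vv 2 0 1) 1 := by
        rw [monomial_vv]; ring
      rw [h]; exact hcub9 2 0 1 (by norm_num) (by norm_num)
    · have h : (X 0 * X 1 ^ 2 : MvPolynomial (Fin 3) k) = monomial (vv 1 2 0) 1 := by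
        rw [monomial_vv]; ring
      rw [h]; exact hcub9 1 2 0 (by norm_num) (by norm_num)
    · have h : (X 0 * X 1 * X 2 : MvPolynomial (Fin 3) k) = monomial (vv 1 1 1) 1 := by
        rw [monomial_vv]; ring
      rw [h]; exact hcub9 1 1 1 (by norm_num) (by norm_num)
    · have h : (X 0 * X 2 ^ 2 : MvPolynomial (Fin 3) k) = monomial (vv 1 0 2) 1 := by
        rw [monomial_vv]; ring
      rw [h]; exact hcub9 1 0 2 (by norm_num) (by norm_num)
    · have h : (X 1 ^ 3 : MvPolynomial (Fin 3) k) = monomial (vv 0 3 0) 1 := by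
        rw [monomial_vv]; ring
      rw [h]; exact hcub9 0 3 0 (by norm_num) (by norm_num)
    · have h : (X 1 ^ 2 * X 2 : MvPolynomial (Fin 3) k) = monomial (vv 0 2 1) 1 := by
        rw [monomial_vv]; ring
      rw [h]; exact hcub9 0 2 1 (by norm_num) (by norm_num)
    · have h : (X 1 * X 2 ^ 2 : MvPolynomial (Fin 3) k) = monomial (vv 0 1 2) 1 := by
        rw [monomial_vv]; ring
      rw [h]; exact hcub9 0 1 2 (by norm_num) (by norm_num)
    · have h : ((X 2 : MvPolynomial (Fin 3) k) ^ 4) = monomial (vv 0 0 4) 1 := by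
        rw [monomial_vv]; ring
      rw [h]; exact hx4
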